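/- arXiv:1905.08267 — 3 statements merged into one kernel-verified Lean document; each statement's English description precedes it below -/
import Mathlib

section
/- Let e be an empirical model on a continuous-variable measurement scenario and let e^bin be the discrete-variable empirical model obtained by pushing e forward along a family of measurable maps t_x : O_x → O'_x with each O'_x finite. Then NCF(e) ≤ NCF(e^bin), equivalently CF(e^bin) ≤ CF(e). -/
open MeasureTheory
open scoped ENNReal

/-- The projection from the global outcome space onto the outcomes of a context `C`. -/
def proj {X : Type*} {O : X → Type*} (C : Set X) (g : ∀ x, O x) : ∀ x : C, O x :=
  fun x => g x

/-- The noncontextual fraction. -/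
noncomputable def NCF {G : Type*} [MeasurableSpace G] {I : Type*} (M : Finset I)
    {Gc : I → Type*} [∀ i, MeasurableSpace (Gc i)] (π : ∀ i, G → Gc i)
    (e : ∀ i, Measure (Gc i)) : ℝ≥0∞ :=
  sSup { r | ∃ μ : Measure G, (∀ i ∈ M, μ.map (π i) ≤ e i) ∧ r = μ Set.univ }

/-! Binning acts on global assignments by the product map `g ↦ (x ↦ t x (g x))`, which commutes
with restriction to a context. It therefore carries every measure on global
assignments that is dominated by `e` on each context to one, of the same total mass, dominated by
`e^bin`; so the supremum defining `NCF` can only grow. -/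

theorem NCF_le_NCF_map {G G' I : Type*} [MeasurableSpace G] [MeasurableSpace G'] (M : Finset I)
    {Gc Gc' : I → Type*} [∀ i, MeasurableSpace (Gc i)] [∀ i, MeasurableSpace (Gc' i)]
    {π : ∀ i, G → Gc i} {π' : ∀ i, G' → Gc' i} (e : ∀ i, Measure (Gc i))
    {T : G → G'} {Tc : ∀ i, Gc i → Gc' i}
    (hπ : ∀ i, Measurable (π i)) (hπ' : ∀ i, Measurable (π' i))
    (hT : Measurable T) (hTc : ∀ i, Measurable (Tc i))
    (hcomm : ∀ i, π' i ∘ T = Tc i ∘ π i) :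
    NCF M π e ≤ NCF M π' (fun i => (e i).map (Tc i)) := by
  refine sSup_le_sSup ?_
  rintro r ⟨μ, hμ, rfl⟩
  refine ⟨μ.map T, fun i hi => ?_, by rw [Measure.map_apply hT MeasurableSet.univ, Set.preimage_univ]⟩
  calc (μ.map T).map (π' i) = (μ.map (π i)).map (Tc i) := by
        rw [Measure.map_map (hπ' i) hT, Measure.map_map (hTc i) (hπ i), hcomm]
    _ ≤ (e i).map (Tc i) := Measure.map_mono (hμ i hi) (hTc i)

theorem ncf_le_ncf_binning_general {X : Type*} {O O' : X → Type*}
    [∀ x, MeasurableSpace (O x)] [∀ x, MeasurableSpace (O' x)]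
    (M : Finset (Set X))
    (e : ∀ C : Set X, Measure (∀ x : C, O x))
    (t : ∀ x, O x → O' x) (ht : ∀ x, Measurable (t x)) :
    NCF M (fun C : Set X => proj C (O := O)) e ≤
      NCF M (fun C : Set X => proj C (O := O'))
        (fun C => (e C).map (fun g (x : C) => t x (g x))) ∧
    1 - NCF M (fun C : Set X => proj C (O := O'))
        (fun C => (e C).map (fun g (x : C) => t x (g x))) ≤
      1 - NCF M (fun C : Set X => proj C (O := O)) e := by
  have hbin := NCF_le_NCF_map M e (π := fun C => proj C) (π' := fun C => proj C)
    (T := fun g x => t x (g x)) (Tc := fun C g x => t x (g x))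
    Set.measurable_restrict Set.measurable_restrict (by fun_prop) (fun C => by fun_prop)
    (fun _ => rfl)
  exact ⟨hbin, tsub_le_tsub_left hbin 1⟩

/-- binning (pushing forward along measurable maps `t x : O x → O' x`
with each `O' x` finite) does not decrease the noncontextual fraction:
`NCF e ≤ NCF e^bin`, equivalently `CF e^bin ≤ CF e`. -/
theorem ncf_le_ncf_binning {X : Type*} [Fintype X] {O O' : X → Type*}
    [∀ x, MeasurableSpace (O x)] [∀ x, MeasurableSpace (O' x)] [∀ x, Fintype (O' x)]
    (M : Finset (Set X))
    (e : ∀ C : Set X, Measure (∀ x : C, O x))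
    (he : ∀ C ∈ M, IsProbabilityMeasure (e C))
    (t : ∀ x, O x → O' x) (ht : ∀ x, Measurable (t x)) :
    NCF M (fun C : Set X => proj C (O := O)) e ≤
      NCF M (fun C : Set X => proj C (O := O'))
        (fun C => (e C).map (fun g (x : C) => t x (g x))) ∧
    1 - NCF M (fun C : Set X => proj C (O := O'))
        (fun C => (e C).map (fun g (x : C) => t x (g x))) ≤
      1 - NCF M (fun C : Set X => proj C (O := O)) e :=
  ncf_le_ncf_binning_general M e t ht
end

section
/- For empirical models e₁, e₂ on measurement scenarios S₁, S₂, the product empirical model e₁ ⊗ e₂ on the product scenario satisfies NCF(e₁ ⊗ e₂) ≥ NCF(e₁)·NCF(e₂). -/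
open MeasureTheory
open scoped ENNReal

theorem measurable_proj {X : Type*} {O : X → Type*} [∀ x, MeasurableSpace (O x)]
    (C : Set X) : Measurable (proj (O := O) C) :=
  measurable_pi_lambda _ fun x => measurable_pi_apply _

theorem prod_mono_aux {α β : Type*} [MeasurableSpace α] [MeasurableSpace β]
    {μ₁ ν₁ : Measure α} {μ₂ ν₂ : Measure β} [SFinite μ₁] [SFinite μ₂] [SFinite ν₁] [SFinite ν₂]
    (h₁ : μ₁ ≤ ν₁) (h₂ : μ₂ ≤ ν₂) : μ₁.prod μ₂ ≤ ν₁.prod ν₂ := by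
  refine Measure.le_iff.2 fun s hs => ?_
  rw [Measure.prod_apply hs, Measure.prod_apply hs]
  exact lintegral_mono' h₁ fun x => h₂ _

/-- the product `e₁ ⊗ e₂` of two empirical models, with contexts `C₁ ∪ C₂`
for `C₁ ∈ M₁, C₂ ∈ M₂`, outcome projections `ρ₁ × ρ₂` and empirical measures the
product measures `(e₁)_{C₁} × (e₂)_{C₂}`, satisfies
`NCF (e₁ ⊗ e₂) ≥ NCF e₁ * NCF e₂`. -/
theorem ncf_prod_ge {X₁ X₂ : Type*} [Fintype X₁] [Fintype X₂]
    {O₁ : X₁ → Type*} {O₂ : X₂ → Type*}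
    [∀ x, MeasurableSpace (O₁ x)] [∀ x, MeasurableSpace (O₂ x)]
    (M₁ : Finset (Set X₁)) (M₂ : Finset (Set X₂))
    (e₁ : ∀ C : Set X₁, Measure (∀ x : C, O₁ x))
    (e₂ : ∀ C : Set X₂, Measure (∀ x : C, O₂ x))
    (he₁ : ∀ C ∈ M₁, IsProbabilityMeasure (e₁ C))
    (he₂ : ∀ C ∈ M₂, IsProbabilityMeasure (e₂ C)) :
    NCF (M₁ ×ˢ M₂)
        (fun p : Set X₁ × Set X₂ =>
          fun gg : (∀ x, O₁ x) × (∀ x, O₂ x) => (proj p.1 gg.1, proj p.2 gg.2))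
        (fun p : Set X₁ × Set X₂ => (e₁ p.1).prod (e₂ p.2)) ≥
      NCF M₁ (fun C : Set X₁ => proj C (O := O₁)) e₁ *
        NCF M₂ (fun C : Set X₂ => proj C (O := O₂)) e₂ := by
  -- degenerate cases: empty global outcome spaces
  by_cases h1 : Nonempty (∀ x, O₁ x)
  swap
  · have : NCF M₁ (fun C : Set X₁ => proj C (O := O₁)) e₁ = 0 := by
      refine le_antisymm (sSup_le ?_) zero_le
      rintro r ⟨μ, -, rfl⟩
      have : (Set.univ : Set (∀ x, O₁ x)) = ∅ := by
        exact Set.eq_empty_iff_forall_notMem.2 fun g _ => h1 ⟨g⟩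
      simp [this]
    rw [this, zero_mul]
    exact zero_le
  by_cases h2 : Nonempty (∀ x, O₂ x)
  swap
  · have : NCF M₂ (fun C : Set X₂ => proj C (O := O₂)) e₂ = 0 := by
      refine le_antisymm (sSup_le ?_) zero_le
      rintro r ⟨μ, -, rfl⟩
      have : (Set.univ : Set (∀ x, O₂ x)) = ∅ := by
        exact Set.eq_empty_iff_forall_notMem.2 fun g _ => h2 ⟨g⟩
      simp [this]
    rw [this, mul_zero]
    exact zero_le
  -- degenerate cases: empty measurement context families
  by_cases hM1 : M₁.Nonempty
  swap
  · have hempty : M₁ ×ˢ M₂ = ∅ := by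
      rw [Finset.not_nonempty_iff_eq_empty] at hM1
      simp [hM1]
    refine le_trans le_top (le_sSup ?_)
    obtain ⟨g₁⟩ := h1; obtain ⟨g₂⟩ := h2
    refine ⟨(⊤ : ℝ≥0∞) • Measure.dirac (g₁, g₂), ?_, ?_⟩
    · intro p hp; simp [hempty] at hp
    · simp
  by_cases hM2 : M₂.Nonempty
  swap
  · have hempty : M₁ ×ˢ M₂ = ∅ := by
      rw [Finset.not_nonempty_iff_eq_empty] at hM2
      simp [hM2]
    refine le_trans le_top (le_sSup ?_)
    obtain ⟨g₁⟩ := h1; obtain ⟨g₂⟩ := h2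
    refine ⟨(⊤ : ℝ≥0∞) • Measure.dirac (g₁, g₂), ?_, ?_⟩
    · intro p hp; simp [hempty] at hp
    · simp
  -- main case
  rw [ge_iff_le, NCF, NCF, ENNReal.sSup_mul]
  refine iSup₂_le ?_
  rintro a ⟨μ₁, hμ₁, rfl⟩
  rw [ENNReal.mul_sSup]
  refine iSup₂_le ?_
  rintro b ⟨μ₂, hμ₂, rfl⟩
  -- the witnessing measures are finite
  obtain ⟨C₁, hC₁⟩ := hM1
  obtain ⟨C₂, hC₂⟩ := hM2
  haveI := he₁ C₁ hC₁
  haveI := he₂ C₂ hC₂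
  have hfin₁ : μ₁ Set.univ ≤ 1 := by
    have := hμ₁ C₁ hC₁ Set.univ
    rwa [Measure.map_apply (measurable_proj C₁) MeasurableSet.univ, Set.preimage_univ,
      (he₁ C₁ hC₁).measure_univ] at this
  have hfin₂ : μ₂ Set.univ ≤ 1 := by
    have := hμ₂ C₂ hC₂ Set.univ
    rwa [Measure.map_apply (measurable_proj C₂) MeasurableSet.univ, Set.preimage_univ,
      (he₂ C₂ hC₂).measure_univ] at this
  haveI : IsFiniteMeasure μ₁ := ⟨lt_of_le_of_lt hfin₁ ENNReal.one_lt_top⟩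
  haveI : IsFiniteMeasure μ₂ := ⟨lt_of_le_of_lt hfin₂ ENNReal.one_lt_top⟩
  refine le_sSup ⟨μ₁.prod μ₂, ?_, ?_⟩
  · rintro ⟨D₁, D₂⟩ hD
    rw [Finset.mem_product] at hD
    haveI := he₁ D₁ hD.1
    haveI := he₂ D₂ hD.2
    have hmap : (μ₁.prod μ₂).map
        (fun gg : (∀ x, O₁ x) × (∀ x, O₂ x) => (proj D₁ gg.1, proj D₂ gg.2)) =
        (μ₁.map (proj D₁)).prod (μ₂.map (proj D₂)) := by
      rw [Measure.map_prod_map μ₁ μ₂ (measurable_proj D₁) (measurable_proj D₂)]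
      rfl
    rw [hmap]
    haveI : IsFiniteMeasure (μ₁.map (proj D₁)) :=
      Measure.isFiniteMeasure_map μ₁ _
    haveI : IsFiniteMeasure (μ₂.map (proj D₂)) :=
      Measure.isFiniteMeasure_map μ₂ _
    exact prod_mono_aux (hμ₁ D₁ hD.1) (hμ₂ D₂ hD.2)
  · rw [← Set.univ_prod_univ, Measure.prod_prod]
end

section
/- Let (β, R) be a generalised Bell inequality on a measurement scenario. Then for any empirical model e, the normalised violation max{0, ⟨β, e⟩ − R}/(‖β‖ − R) is at most CF(e), the contextual fraction of e. -/
open MeasureTheory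
open scoped ENNReal BoundedContinuousFunction

/-- for a generalised Bell inequality `(β, R)` (i.e. `⟨β, e'⟩ ≤ R` for
every noncontextual model `e'`), with `‖β‖ = ∑_C sup_o β_C(o) > R`, the normalised
violation `max {0, ⟨β, e⟩ - R} / (‖β‖ - R)` by any empirical model `e` is at most the
contextual fraction `CF(e) = 1 - NCF(e)`. -/
theorem normalised_violation_le_cf {X : Type*} [Fintype X] {O : X → Type*}
    [∀ x, TopologicalSpace (O x)] [∀ x, SecondCountableTopology (O x)]
    [∀ x, LocallyCompactSpace (O x)] [∀ x, T2Space (O x)]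
    [∀ x, MeasurableSpace (O x)] [∀ x, BorelSpace (O x)]
    (M : Finset (Set X)) (hM : M.Nonempty)
    (β : ∀ C : Set X, ((∀ x : C, O x) →ᵇ ℝ)) (R : ℝ)
    (hBell : ∀ e' : ∀ C : Set X, Measure (∀ x : C, O x),
      (∀ C ∈ M, IsProbabilityMeasure (e' C)) →
      (∃ μ : Measure (∀ x, O x), IsProbabilityMeasure μ ∧
        ∀ C ∈ M, μ.map (proj C) = e' C) →
      ∑ C ∈ M, ∫ y, β C y ∂(e' C) ≤ R)
    (hnorm : R < ∑ C ∈ M, ⨆ o, β C o)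
    (e : ∀ C : Set X, Measure (∀ x : C, O x))
    (he : ∀ C ∈ M, IsProbabilityMeasure (e C)) :
    max 0 ((∑ C ∈ M, ∫ y, β C y ∂(e C)) - R) / ((∑ C ∈ M, ⨆ o, β C o) - R) ≤
      1 - (NCF M (fun C : Set X => proj C (O := O)) e).toReal := by
  classical
  set B : ℝ := ∑ C ∈ M, ⨆ o, β C o with hB
  set s : ℝ := ∑ C ∈ M, ∫ y, β C y ∂(e C) with hs
  have hBR : (0:ℝ) < B - R := sub_pos.mpr hnorm
  have hmeas : ∀ C : Set X, Measurable (proj C (O := O)) := fun C =>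
    measurable_pi_lambda _ (fun x => measurable_pi_apply x.val)
  have hne : ∀ C ∈ M, Nonempty (∀ x : C, O x) := by
    intro C hC
    haveI := he C hC
    rcases isEmpty_or_nonempty (∀ x : C, O x) with h | h
    · have h1 : (e C) Set.univ = 1 := measure_univ
      rw [Set.univ_eq_empty_iff.mpr h] at h1
      simp at h1
    · exact h
  have hbdd : ∀ C : Set X, BddAbove (Set.range (β C)) := by
    intro C
    exact ⟨‖β C‖, by rintro y ⟨x, rfl⟩
                     exact (le_abs_self _).trans ((β C).norm_coe_le_norm x)⟩
  -- the feasible set defining NCF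
  set S := { r | ∃ μ : Measure (∀ x, O x),
      (∀ C ∈ M, μ.map (proj C) ≤ e C) ∧ r = μ Set.univ } with hSdef
  have key : ∀ r ∈ S, r ≤ 1 ∧ s ≤ r.toReal * R + (1 - r.toReal) * B := by
    rintro r ⟨μ, hμ, rfl⟩
    obtain ⟨C0, hC0⟩ := hM
    have hmapuniv : ∀ C : Set X, (μ.map (proj C)) Set.univ = μ Set.univ := by
      intro C
      rw [Measure.map_apply (hmeas C) MeasurableSet.univ, Set.preimage_univ]
    have hr1 : μ Set.univ ≤ 1 := by
      haveI := he C0 hC0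
      have h := Measure.le_iff'.mp (hμ C0 hC0) Set.univ
      rw [hmapuniv C0] at h
      simpa using h
    haveI : IsFiniteMeasure μ := ⟨lt_of_le_of_lt hr1 ENNReal.one_lt_top⟩
    set t : ℝ := (μ Set.univ).toReal with ht
    have hrne : μ Set.univ ≠ ⊤ := (lt_of_le_of_lt hr1 ENNReal.one_lt_top).ne
    have ht0 : 0 ≤ t := ENNReal.toReal_nonneg
    have ht1 : t ≤ 1 := by
      have := ENNReal.toReal_mono (by simp) hr1
      simpa using this
    refine ⟨hr1, ?_⟩
    -- decompose each integral
    have hI : ∀ C ∈ M, ∫ y, β C y ∂(e C) ≤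
        (∫ y, β C y ∂(μ.map (proj C))) + (⨆ o, β C o) * (1 - t) := by
      intro C hC
      haveI := he C hC
      haveI : Nonempty (∀ x : C, O x) := hne C hC
      haveI hfin : IsFiniteMeasure (μ.map (proj C)) :=
        ⟨by rw [hmapuniv C]; exact lt_of_le_of_lt hr1 ENNReal.one_lt_top⟩
      set ν := e C - μ.map (proj C) with hν
      haveI : IsFiniteMeasure ν := by
        constructor
        calc ν Set.univ ≤ (e C) Set.univ := Measure.le_iff'.mp (Measure.sub_le) _
        _ < ⊤ := measure_lt_top _ _
      have hsplit : e C = μ.map (proj C) + ν := by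
        rw [hν, add_comm]
        exact (Measure.sub_add_cancel_of_le (hμ C hC)).symm
      have hνuniv : ν Set.univ = 1 - μ Set.univ := by
        rw [hν, Measure.sub_apply MeasurableSet.univ (hμ C hC), hmapuniv C, measure_univ]
      have hνtoReal : (ν Set.univ).toReal = 1 - t := by
        rw [hνuniv, ENNReal.toReal_sub_of_le hr1 ENNReal.one_ne_top, ENNReal.toReal_one]
      have hint : ∫ y, β C y ∂(ν) ≤ (⨆ o, β C o) * (1 - t) := by
        have hle : ∀ y, β C y ≤ ⨆ o, β C o := fun y => le_ciSup (hbdd C) y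
        calc ∫ y, β C y ∂ν ≤ ∫ _, (⨆ o, β C o) ∂ν :=
              integral_mono ((β C).integrable ν) (integrable_const _) hle
        _ = (ν Set.univ).toReal * (⨆ o, β C o) := by rw [integral_const]; simp [smul_eq_mul, Measure.real]
        _ = (⨆ o, β C o) * (1 - t) := by rw [hνtoReal]; ring
      calc ∫ y, β C y ∂(e C)
          = (∫ y, β C y ∂(μ.map (proj C))) + ∫ y, β C y ∂ν := by
            rw [hsplit, integral_add_measure ((β C).integrable _) ((β C).integrable _)]
      _ ≤ (∫ y, β C y ∂(μ.map (proj C))) + (⨆ o, β C o) * (1 - t) := by linarith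
    -- Bell-inequality part
    have hBellPart : ∑ C ∈ M, ∫ y, β C y ∂(μ.map (proj C)) ≤ t * R := by
      rcases eq_or_ne (μ Set.univ) 0 with h0 | h0
      · have hμ0 : μ = 0 := Measure.measure_univ_eq_zero.mp h0
        have : ∀ C ∈ M, ∫ y, β C y ∂(μ.map (proj C)) = 0 := by
          intro C hC; rw [hμ0]; simp
        rw [Finset.sum_congr rfl this]
        simp [ht, h0]
      · set μ' := (μ Set.univ)⁻¹ • μ with hμ'
        haveI hP : IsProbabilityMeasure μ' := by
          constructor
          rw [hμ', Measure.smul_apply, smul_eq_mul, ENNReal.inv_mul_cancel h0 hrne]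
        have hmapsmul : ∀ C : Set X, μ'.map (proj C) =
            (μ Set.univ)⁻¹ • (μ.map (proj C)) := by
          intro C; rw [hμ', Measure.map_smul]
        have hprob : ∀ C ∈ M, IsProbabilityMeasure (μ'.map (proj C)) := by
          intro C hC
          exact Measure.isProbabilityMeasure_map (hmeas C).aemeasurable
        have hglobal : ∃ ν : Measure (∀ x, O x), IsProbabilityMeasure ν ∧
            ∀ C ∈ M, ν.map (proj C) = μ'.map (proj C) := ⟨μ', hP, fun C _ => rfl⟩
        have hB := hBell (fun C => μ'.map (proj C)) hprob hglobal
        have ht0' : 0 < t := by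
          rw [ht]
          exact ENNReal.toReal_pos h0 hrne
        have hsmul : ∀ C : Set X, ∫ y, β C y ∂(μ'.map (proj C)) =
            t⁻¹ * ∫ y, β C y ∂(μ.map (proj C)) := by
          intro C
          rw [hmapsmul C, integral_smul_measure, smul_eq_mul, ENNReal.toReal_inv]
        rw [Finset.sum_congr rfl (fun C _ => hsmul C), ← Finset.mul_sum] at hB
        have := mul_le_mul_of_nonneg_left hB (le_of_lt ht0')
        rw [← mul_assoc, mul_inv_cancel₀ ht0'.ne', one_mul] at this
        exact this
    calc s ≤ ∑ C ∈ M, ((∫ y, β C y ∂(μ.map (proj C))) + (⨆ o, β C o) * (1 - t)) :=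
          Finset.sum_le_sum hI
    _ = (∑ C ∈ M, ∫ y, β C y ∂(μ.map (proj C))) + (1 - t) * B := by
          rw [Finset.sum_add_distrib]
          congr 1
          rw [Finset.mul_sum]
          exact Finset.sum_congr rfl (fun C _ => by ring)
    _ ≤ t * R + (1 - t) * B := by linarith
  -- wrap up
  set c : ℝ := 1 - max 0 (s - R) / (B - R) with hc
  have h0S : (0:ℝ≥0∞) ∈ S := ⟨0, fun C _ => by simp only [Measure.map_zero]; exact Measure.zero_le _, by simp only [Measure.coe_zero, Pi.zero_apply]⟩
  have hc0 : 0 ≤ c := by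
    obtain ⟨_, h0⟩ := key 0 h0S
    have : max 0 (s - R) ≤ B - R := by
      simp only [ENNReal.toReal_zero] at h0
      rw [max_le_iff]
      constructor <;> linarith
    rw [hc]
    have := div_le_one_of_le₀ this hBR.le
    linarith
  have hrc : ∀ r ∈ S, r.toReal ≤ c := by
    intro r hr
    obtain ⟨hr1, hrs⟩ := key r hr
    set t := r.toReal with ht
    have ht1 : t ≤ 1 := by
      have := ENNReal.toReal_mono (by simp) hr1
      simpa using this
    have h1 : s - R ≤ (1 - t) * (B - R) := by nlinarith
    have h2 : max 0 (s - R) ≤ (1 - t) * (B - R) := by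
      rw [max_le_iff]
      exact ⟨mul_nonneg (by linarith) hBR.le, h1⟩
    have := (div_le_iff₀ hBR).mpr h2
    rw [hc]
    linarith
  have hNle : NCF M (fun C : Set X => proj C (O := O)) e ≤ ENNReal.ofReal c := by
    apply sSup_le
    intro r hr
    obtain ⟨hr1, _⟩ := key r hr
    exact (ENNReal.le_ofReal_iff_toReal_le (lt_of_le_of_lt hr1 ENNReal.one_lt_top).ne hc0).mpr
      (hrc r hr)
  have hN : (NCF M (fun C : Set X => proj C (O := O)) e).toReal ≤ c :=
    ENNReal.toReal_le_of_le_ofReal hc0 hNle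
  rw [hc] at hN
  linarith
end
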